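/- arXiv:hep-th/9409058 — 2 statements merged into one kernel-verified Lean document; each statement's English description precedes it below -/
import Mathlib

section
/- Let R′ be an n⁴ complex array of real type I and let η be a real metric that is R′-covariant. Then the braided covector algebra V̌(R′,R) admits a (necessarily unique) star structure * satisfying x_i* = Σ_a x_a η^{ai} for all i = 1,…,n. -/
open scoped ComplexConjugate

noncomputable section

/-- An n⁴ array `R^i{}_j{}^k{}_l` viewed as an n²×n² matrix with row index `(i,k)`,
column index `(j,l)`. -/
def toMat (n : ℕ) (R : Fin n → Fin n → Fin n → Fin n → ℂ) :
    Matrix (Fin n × Fin n) (Fin n × Fin n) ℂ :=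
  Matrix.of fun p q => R p.1 q.1 p.2 q.2

/-- Entries `(R⁻¹)^i{}_j{}^k{}_l` of the matrix inverse of `R`. -/
def invEntry (n : ℕ) (R : Fin n → Fin n → Fin n → Fin n → ℂ)
    (i j k l : Fin n) : ℂ :=
  (toMat n R)⁻¹ (i, k) (j, l)

/-- `R` is of real type I: `conj (R^i{}_j{}^k{}_l) = R^l{}_k{}^j{}_i`. -/
def RealTypeI (n : ℕ) (R : Fin n → Fin n → Fin n → Fin n → ℂ) : Prop :=
  ∀ i j k l, conj (R i j k l) = R l k j i

/-- `R` is of antireal type I: `R` invertible and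
`conj (R^i{}_j{}^k{}_l) = (R⁻¹)^j{}_i{}^l{}_k`. -/
def AntirealTypeI (n : ℕ) (R : Fin n → Fin n → Fin n → Fin n → ℂ) : Prop :=
  IsUnit (toMat n R) ∧ ∀ i j k l, conj (R i j k l) = invEntry n R j i l k

/-- `R` is of real type II w.r.t. the involution `σ`:
`conj (R^i{}_j{}^k{}_l) = R^{σk}{}_{σl}{}^{σi}{}_{σj}`. -/
def RealTypeII (n : ℕ) (R : Fin n → Fin n → Fin n → Fin n → ℂ)
    (σ : Fin n → Fin n) : Prop :=
  ∀ i j k l, conj (R i j k l) = R (σ k) (σ l) (σ i) (σ j)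

/-- `R` is of antireal type II w.r.t. the involution `σ`: `R` invertible and
`conj (R^i{}_j{}^k{}_l) = (R⁻¹)^{σi}{}_{σj}{}^{σk}{}_{σl}`. -/
def AntirealTypeII (n : ℕ) (R : Fin n → Fin n → Fin n → Fin n → ℂ)
    (σ : Fin n → Fin n) : Prop :=
  IsUnit (toMat n R) ∧
    ∀ i j k l, conj (R i j k l) = invEntry n R (σ i) (σ j) (σ k) (σ l)

/-- The metric `η` (entries `η^{ij} = η i j`) is `R`-covariant:
`Σ η^{ia} η^{jb} R^k{}_a{}^l{}_b = Σ R^i{}_a{}^j{}_b η^{ak} η^{bl}`. -/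
def MetricCovariant (n : ℕ) (R : Fin n → Fin n → Fin n → Fin n → ℂ)
    (η : Matrix (Fin n) (Fin n) ℂ) : Prop :=
  ∀ i j k l, (∑ a : Fin n, ∑ b : Fin n, η i a * η j b * R k a l b) =
    ∑ a : Fin n, ∑ b : Fin n, R i a j b * η a k * η b l

/-- The metric `η` is real: `conj (η^{ij}) = η_{ji}`, where the lower-index entries
`η_{ij}` are those of the transposed inverse, i.e. `η_{ji} = (η⁻¹) i j`. -/
def MetricReal (n : ℕ) (η : Matrix (Fin n) (Fin n) ℂ) : Prop :=
  ∀ i j, conj (η i j) = η⁻¹ i j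

/-- The relations `x_i x_j = Σ_{a,b} R'^a{}_i{}^b{}_j x_b x_a` of the braided
covector algebra, as a relation on the free algebra. -/
inductive CovRel (n : ℕ) (R' : Fin n → Fin n → Fin n → Fin n → ℂ) :
    FreeAlgebra ℂ (Fin n) → FreeAlgebra ℂ (Fin n) → Prop
  | rel (i j : Fin n) :
      CovRel n R' (FreeAlgebra.ι ℂ i * FreeAlgebra.ι ℂ j)
        (∑ a : Fin n, ∑ b : Fin n,
          R' a i b j • (FreeAlgebra.ι ℂ b * FreeAlgebra.ι ℂ a))

/-- The braided covector algebra `V̌(R',R)`: the free algebra on `x_1,…,x_n` modulo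
the two-sided ideal generated by `x_i x_j − Σ R'^a{}_i{}^b{}_j x_b x_a`. -/
abbrev CovAlg (n : ℕ) (R' : Fin n → Fin n → Fin n → Fin n → ℂ) :=
  RingQuot (CovRel n R')

/-- The generator `x_i` of the braided covector algebra. -/
def xg (n : ℕ) (R' : Fin n → Fin n → Fin n → Fin n → ℂ) (i : Fin n) :
    CovAlg n R' :=
  RingQuot.mkAlgHom ℂ (CovRel n R') (FreeAlgebra.ι ℂ i)

/-- The relations `v^i v^j = Σ_{a,b} R'^i{}_a{}^j{}_b v^b v^a` of the braided
vector algebra, as a relation on the free algebra. -/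
inductive VecRel (n : ℕ) (R' : Fin n → Fin n → Fin n → Fin n → ℂ) :
    FreeAlgebra ℂ (Fin n) → FreeAlgebra ℂ (Fin n) → Prop
  | rel (i j : Fin n) :
      VecRel n R' (FreeAlgebra.ι ℂ i * FreeAlgebra.ι ℂ j)
        (∑ a : Fin n, ∑ b : Fin n,
          R' i a j b • (FreeAlgebra.ι ℂ b * FreeAlgebra.ι ℂ a))

/-- The braided vector algebra `V(R',R)`: the free algebra on `v^1,…,v^n` modulo
the two-sided ideal generated by `v^i v^j − Σ R'^i{}_a{}^j{}_b v^b v^a`. -/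
abbrev VecAlg (n : ℕ) (R' : Fin n → Fin n → Fin n → Fin n → ℂ) :=
  RingQuot (VecRel n R')

/-- The generator `v^i` of the braided vector algebra. -/
def vg (n : ℕ) (R' : Fin n → Fin n → Fin n → Fin n → ℂ) (i : Fin n) :
    VecAlg n R' :=
  RingQuot.mkAlgHom ℂ (VecRel n R') (FreeAlgebra.ι ℂ i)

/-- The relations of the braided tensor square of the braided covector algebra:
generators `x_i = ι (inl i)`, `y_i = ι (inr i)`, with `x`- and `y`-relations from
`R'` and cross relations `y_i x_j = Σ_{a,b} R^a{}_i{}^b{}_j x_b y_a`. -/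
inductive SqRel (n : ℕ) (R' R : Fin n → Fin n → Fin n → Fin n → ℂ) :
    FreeAlgebra ℂ (Fin n ⊕ Fin n) → FreeAlgebra ℂ (Fin n ⊕ Fin n) → Prop
  | xx (i j : Fin n) :
      SqRel n R' R (FreeAlgebra.ι ℂ (Sum.inl i) * FreeAlgebra.ι ℂ (Sum.inl j))
        (∑ a : Fin n, ∑ b : Fin n, R' a i b j •
          (FreeAlgebra.ι ℂ (Sum.inl b) * FreeAlgebra.ι ℂ (Sum.inl a)))
  | yy (i j : Fin n) :
      SqRel n R' R (FreeAlgebra.ι ℂ (Sum.inr i) * FreeAlgebra.ι ℂ (Sum.inr j))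
        (∑ a : Fin n, ∑ b : Fin n, R' a i b j •
          (FreeAlgebra.ι ℂ (Sum.inr b) * FreeAlgebra.ι ℂ (Sum.inr a)))
  | yx (i j : Fin n) :
      SqRel n R' R (FreeAlgebra.ι ℂ (Sum.inr i) * FreeAlgebra.ι ℂ (Sum.inl j))
        (∑ a : Fin n, ∑ b : Fin n, R a i b j •
          (FreeAlgebra.ι ℂ (Sum.inl b) * FreeAlgebra.ι ℂ (Sum.inr a)))

/-- The braided tensor square `B` of the braided covector algebra. -/
abbrev SqAlg (n : ℕ) (R' R : Fin n → Fin n → Fin n → Fin n → ℂ) :=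
  RingQuot (SqRel n R' R)

/-- The generator `x_i` of the braided tensor square. -/
def Xg (n : ℕ) (R' R : Fin n → Fin n → Fin n → Fin n → ℂ) (i : Fin n) :
    SqAlg n R' R :=
  RingQuot.mkAlgHom ℂ (SqRel n R' R) (FreeAlgebra.ι ℂ (Sum.inl i))

/-- The generator `y_i` of the braided tensor square. -/
def Yg (n : ℕ) (R' R : Fin n → Fin n → Fin n → Fin n → ℂ) (i : Fin n) :
    SqAlg n R' R :=
  RingQuot.mkAlgHom ℂ (SqRel n R' R) (FreeAlgebra.ι ℂ (Sum.inr i))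

/-- A conjugate-linear, antimultiplicative, unital map between ℂ-algebras. -/
def IsConjLinearAntiHom {A B : Type*} [Semiring A] [Algebra ℂ A]
    [Semiring B] [Algebra ℂ B] (f : A → B) : Prop :=
  (∀ a b : A, f (a + b) = f a + f b) ∧
  (∀ (c : ℂ) (a : A), f (c • a) = (starRingEnd ℂ) c • f a) ∧
  (∀ a b : A, f (a * b) = f b * f a) ∧
  f 1 = 1

/-- A star structure on a ℂ-algebra: a conjugate-linear, antimultiplicative,
unital, involutive map. -/
def IsStarStructure {A : Type*} [Semiring A] [Algebra ℂ A] (f : A → A) : Prop :=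
  (∀ a b : A, f (a + b) = f a + f b) ∧
  (∀ (c : ℂ) (a : A), f (c • a) = (starRingEnd ℂ) c • f a) ∧
  (∀ a b : A, f (a * b) = f b * f a) ∧
  f 1 = 1 ∧
  (∀ a : A, f (f a) = a)

/-!
A conjugate-linear antihomomorphism `A → B` is the same as a `ℂ`-algebra map from `A` to the
conjugate opposite algebra `B̄ᵒᵖ`, so the star structure is the lift from the free algebra of
`x_i ↦ X_i := Σ_a η^{ai} x_a`. The lift respects the relations because, by real type I, the
conjugated relation contracted with two copies of `η` is exactly the `R'`-covariance of `η`.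
Reality of `η` gives `X_i* = Σ_a η_{ia} X_a = x_i`, and a conjugate-linear antihomomorphism of
a quotient of a free algebra is determined by its values on the generators, which yields both
involutivity and uniqueness.
-/

def ConjOpposite (B : Type*) := Bᵐᵒᵖ

namespace ConjOpposite

variable {B : Type*} [Semiring B]

def op (b : B) : ConjOpposite B := MulOpposite.op b

def unop (b : ConjOpposite B) : B := MulOpposite.unop b

instance : Semiring (ConjOpposite B) := inferInstanceAs (Semiring Bᵐᵒᵖ)

lemma op_mul (a b : B) : op (a * b) = op b * op a := rfl

lemma op_sum {ι : Type*} (s : Finset ι) (g : ι → B) :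
    op (∑ i ∈ s, g i) = ∑ i ∈ s, op (g i) :=
  map_sum MulOpposite.opAddEquiv g s

variable [Algebra ℂ B]

instance : Algebra ℂ (ConjOpposite B) where
  smul c b := op (conj c • unop b)
  algebraMap := (algebraMap ℂ Bᵐᵒᵖ).comp (starRingEnd ℂ)
  commutes' c x := Algebra.commutes (R := ℂ) (A := Bᵐᵒᵖ) (conj c) x
  smul_def' c x := Algebra.smul_def (R := ℂ) (A := Bᵐᵒᵖ) (conj c) x

lemma smul_op (c : ℂ) (b : B) : c • op b = op (conj c • b) := rfl

lemma isConjLinearAntiHom_unop_comp {A : Type*} [Semiring A] [Algebra ℂ A]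
    (Φ : A →ₐ[ℂ] ConjOpposite B) : IsConjLinearAntiHom fun a => unop (Φ a) :=
  ⟨fun a b => by simp only [map_add]; rfl, fun c a => by simp only [map_smul]; rfl,
    fun a b => by simp only [map_mul]; rfl, by simp only [map_one]; rfl⟩

end ConjOpposite

theorem RingQuot.freeAlgebra_induction {R X : Type*} [CommSemiring R]
    {r : FreeAlgebra R X → FreeAlgebra R X → Prop} {P : RingQuot r → Prop}
    (grade0 : ∀ c, P (algebraMap R _ c))
    (grade1 : ∀ x, P (mkAlgHom R r (FreeAlgebra.ι R x)))
    (add : ∀ a b, P a → P b → P (a + b)) (mul : ∀ a b, P a → P b → P (a * b))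
    (a : RingQuot r) : P a := by
  obtain ⟨a, rfl⟩ := mkAlgHom_surjective R r a
  induction a using FreeAlgebra.induction with
  | grade0 c => simpa only [AlgHom.commutes] using grade0 c
  | grade1 x => exact grade1 x
  | mul a b ha hb => simpa only [map_mul] using mul _ _ ha hb
  | add a b ha hb => simpa only [map_add] using add _ _ ha hb

namespace IsConjLinearAntiHom

variable {A B : Type*} [Semiring A] [Algebra ℂ A] [Semiring B] [Algebra ℂ B] {f : A → B}

lemma map_smul_one (hf : IsConjLinearAntiHom f) (c : ℂ) : f (c • 1) = conj c • 1 := by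
  rw [hf.2.1, hf.2.2.2]

lemma map_sum (hf : IsConjLinearAntiHom f) {ι : Type*} (s : Finset ι) (g : ι → A) :
    f (∑ i ∈ s, g i) = ∑ i ∈ s, f (g i) := by
  have map_zero : f 0 = 0 := by simpa using hf.2.1 0 0
  exact _root_.map_sum (⟨⟨f, map_zero⟩, hf.1⟩ : A →+ B) g s

end IsConjLinearAntiHom

section FreeQuotient

variable {X : Type*} {r : FreeAlgebra ℂ X → FreeAlgebra ℂ X → Prop}

lemma IsConjLinearAntiHom.eq_of_ringQuot {B : Type*} [Semiring B] [Algebra ℂ B]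
    {f g : RingQuot r → B} (hf : IsConjLinearAntiHom f) (hg : IsConjLinearAntiHom g)
    (h : ∀ x, f (RingQuot.mkAlgHom ℂ r (FreeAlgebra.ι ℂ x)) =
      g (RingQuot.mkAlgHom ℂ r (FreeAlgebra.ι ℂ x))) : f = g := by
  funext a
  induction a using RingQuot.freeAlgebra_induction with
  | grade0 c => rw [Algebra.algebraMap_eq_smul_one, hf.map_smul_one, hg.map_smul_one]
  | grade1 x => exact h x
  | add a b ha hb => rw [hf.1, hg.1, ha, hb]
  | mul a b ha hb => rw [hf.2.2.1, hg.2.2.1, ha, hb]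

lemma IsConjLinearAntiHom.involutive_of_ringQuot {f : RingQuot r → RingQuot r}
    (hf : IsConjLinearAntiHom f)
    (h : ∀ x, f (f (RingQuot.mkAlgHom ℂ r (FreeAlgebra.ι ℂ x))) =
      RingQuot.mkAlgHom ℂ r (FreeAlgebra.ι ℂ x)) : Function.Involutive f := by
  intro a
  induction a using RingQuot.freeAlgebra_induction with
  | grade0 c =>
    rw [Algebra.algebraMap_eq_smul_one, hf.map_smul_one, hf.map_smul_one, Complex.conj_conj]
  | grade1 x => exact h x
  | add a b ha hb => rw [hf.1, hf.1, ha, hb]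
  | mul a b ha hb => rw [hf.2.2.1, hf.2.2.1, ha, hb]

end FreeQuotient

lemma Fintype.sum_sum_sum_sum_comm {ι κ M : Type*} [Fintype ι] [Fintype κ] [AddCommMonoid M]
    (f : ι → ι → κ → κ → M) :
    ∑ a, ∑ b, ∑ c, ∑ d, f a b c d = ∑ c, ∑ d, ∑ a, ∑ b, f a b c d :=
  calc _ = ∑ p : ι × ι, ∑ q : κ × κ, f p.1 p.2 q.1 q.2 := by simp only [Fintype.sum_prod_type]
    _ = ∑ q : κ × κ, ∑ p : ι × ι, f p.1 p.2 q.1 q.2 := Finset.sum_comm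
    _ = _ := by simp only [Fintype.sum_prod_type]

lemma Fintype.sum_sum_smul_sum_sum {ι κ M : Type*} [Fintype ι] [Fintype κ] [AddCommMonoid M]
    [Module ℂ M] (s : ι → ι → ℂ) (t : ι → ι → κ → κ → ℂ) (v : κ → κ → M) :
    ∑ a, ∑ b, s a b • ∑ c, ∑ d, t a b c d • v c d =
      ∑ c, ∑ d, (∑ a, ∑ b, s a b * t a b c d) • v c d := by
  simp_rw [Finset.smul_sum, smul_smul, Finset.sum_smul]
  exact Fintype.sum_sum_sum_sum_comm _

section CovectorAlgebra

variable {n : ℕ} {R' : Fin n → Fin n → Fin n → Fin n → ℂ}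

lemma xg_mul_xg (a b : Fin n) :
    xg n R' a * xg n R' b = ∑ c, ∑ d, R' d a c b • (xg n R' c * xg n R' d) := by
  rw [Finset.sum_comm]
  simpa only [xg, map_mul, map_sum, map_smul] using
    RingQuot.mkAlgHom_rel ℂ (CovRel.rel (R' := R') a b)

lemma exists_isConjLinearAntiHom_covAlg {B : Type*} [Semiring B] [Algebra ℂ B]
    (y : Fin n → B) (hy : ∀ i j, y j * y i = ∑ a, ∑ b, conj (R' a i b j) • (y a * y b)) :
    ∃ f : CovAlg n R' → B, IsConjLinearAntiHom f ∧ ∀ i, f (xg n R' i) = y i := by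
  let F : FreeAlgebra ℂ (Fin n) →ₐ[ℂ] ConjOpposite B :=
    FreeAlgebra.lift ℂ fun i => ConjOpposite.op (y i)
  have hF : ∀ ⦃u v⦄, CovRel n R' u v → F u = F v := by
    rintro _ _ ⟨i, j⟩
    simp only [F, map_mul, map_sum, map_smul, FreeAlgebra.lift_ι_apply]
    simp_rw [← ConjOpposite.op_mul, ConjOpposite.smul_op, ← ConjOpposite.op_sum]
    rw [hy]
  refine ⟨fun a => ConjOpposite.unop (RingQuot.liftAlgHom ℂ ⟨F, hF⟩ a),
    ConjOpposite.isConjLinearAntiHom_unop_comp _, fun i => ?_⟩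
  simp only [xg, RingQuot.liftAlgHom_mkAlgHom_apply, F, FreeAlgebra.lift_ι_apply]
  rfl

end CovectorAlgebra

section Metric

variable {n : ℕ} {R' : Fin n → Fin n → Fin n → Fin n → ℂ} {η : Matrix (Fin n) (Fin n) ℂ}

def xgStar (n : ℕ) (R' : Fin n → Fin n → Fin n → Fin n → ℂ) (η : Matrix (Fin n) (Fin n) ℂ)
    (i : Fin n) : CovAlg n R' :=
  ∑ a, η a i • xg n R' a

lemma xgStar_mul_xgStar (i j : Fin n) :
    xgStar n R' η i * xgStar n R' η j =
      ∑ c, ∑ d, (η c i * η d j) • (xg n R' c * xg n R' d) := by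
  simp only [xgStar, Finset.sum_mul_sum, smul_mul_smul_comm]

lemma RealTypeI.sum_conj_mul_metric (hR' : RealTypeI n R') (hcov : MetricCovariant n R' η)
    (i j c d : Fin n) :
    ∑ a, ∑ b, conj (R' a i b j) * (η c a * η d b) =
      ∑ a, ∑ b, η a j * η b i * R' d a c b :=
  calc _ = ∑ a, ∑ b, η d a * η c b * R' j a i b := by
        rw [Finset.sum_comm]
        exact Finset.sum_congr rfl fun b _ => Finset.sum_congr rfl fun a _ => by rw [hR']; ring
    _ = _ := by
        rw [hcov d c j i]
        exact Finset.sum_congr rfl fun a _ => Finset.sum_congr rfl fun b _ => by ring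

lemma xgStar_mul_xgStar_eq_sum (hR' : RealTypeI n R') (hcov : MetricCovariant n R' η)
    (i j : Fin n) :
    xgStar n R' η j * xgStar n R' η i =
      ∑ a, ∑ b, conj (R' a i b j) • (xgStar n R' η a * xgStar n R' η b) := by
  calc xgStar n R' η j * xgStar n R' η i
      = ∑ a, ∑ b, (η a j * η b i) • ∑ c, ∑ d, R' d a c b • (xg n R' c * xg n R' d) := by
        simp only [← xg_mul_xg, xgStar_mul_xgStar]
    _ = ∑ a, ∑ b, conj (R' a i b j) • ∑ c, ∑ d, (η c a * η d b) • (xg n R' c * xg n R' d) := by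
        simp only [Fintype.sum_sum_smul_sum_sum, hR'.sum_conj_mul_metric hcov]
    _ = _ := by simp only [xgStar_mul_xgStar]

lemma IsConjLinearAntiHom.map_xgStar (hη : IsUnit η) (hreal : MetricReal n η)
    {f : CovAlg n R' → CovAlg n R'} (hf : IsConjLinearAntiHom f)
    (hf_gen : ∀ i, f (xg n R' i) = xgStar n R' η i) (i : Fin n) :
    f (xgStar n R' η i) = xg n R' i := by
  have hmul : η * η⁻¹ = 1 := Matrix.mul_nonsing_inv η ((Matrix.isUnit_iff_isUnit_det η).mp hη)
  calc f (xgStar n R' η i) = ∑ b, (η * η⁻¹) b i • xg n R' b := by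
        simp only [xgStar, hf.map_sum, hf.2.1, hf_gen, Finset.smul_sum, smul_smul, hreal _ i]
        rw [Finset.sum_comm]
        simp only [Matrix.mul_apply, Finset.sum_smul, mul_comm]
    _ = xg n R' i := by simp [hmul, Matrix.one_apply, ite_smul]

end Metric

theorem stmt3_general (n : ℕ)
    (R' : Fin n → Fin n → Fin n → Fin n → ℂ)
    (hR' : RealTypeI n R')
    (η : Matrix (Fin n) (Fin n) ℂ) (hη : IsUnit η)
    (hreal : MetricReal n η) (hcov : MetricCovariant n R' η) :
    ∃! f : CovAlg n R' → CovAlg n R',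
      IsStarStructure f ∧
        ∀ i : Fin n, f (xg n R' i) = ∑ a : Fin n, η a i • xg n R' a := by
  obtain ⟨f, hf, hf_gen⟩ :=
    exists_isConjLinearAntiHom_covAlg (xgStar n R' η) (xgStar_mul_xgStar_eq_sum hR' hcov)
  have hf_inv : Function.Involutive f := hf.involutive_of_ringQuot fun i =>
    (congrArg f (hf_gen i)).trans (hf.map_xgStar hη hreal hf_gen i)
  refine ⟨f, ⟨⟨hf.1, hf.2.1, hf.2.2.1, hf.2.2.2, hf_inv⟩, hf_gen⟩, ?_⟩
  rintro g ⟨⟨g_add, g_smul, g_mul, g_one, -⟩, g_gen⟩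
  exact IsConjLinearAntiHom.eq_of_ringQuot ⟨g_add, g_smul, g_mul, g_one⟩ hf fun i =>
    (g_gen i).trans (hf_gen i).symm

/-- if `R'` is of real type I and `η` is a real `R'`-covariant metric,
the braided covector algebra admits a unique star structure with
`x_i* = Σ_a x_a η^{ai}`. -/
theorem stmt3 (n : ℕ) (hn : 1 ≤ n)
    (R R' : Fin n → Fin n → Fin n → Fin n → ℂ)
    (hR' : RealTypeI n R')
    (η : Matrix (Fin n) (Fin n) ℂ) (hη : IsUnit η)
    (hreal : MetricReal n η) (hcov : MetricCovariant n R' η) :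
    ∃! f : CovAlg n R' → CovAlg n R',
      IsStarStructure f ∧
        ∀ i : Fin n, f (xg n R' i) = ∑ a : Fin n, η a i • xg n R' a :=
  stmt3_general n R' hR' η hη hreal hcov
end
end

section
/- Let σ be an involution of {1,…,n}, let R be an n⁴ complex array of real type II with respect to σ, and let R′ be an n⁴ complex array of real type II or of antireal type II with respect to σ. Let * be the star structure on the braided covector algebra V̌(R′,R) with x_i* = x_{σ(i)}, and let B be the braided tensor square of V̌(R′,R). Then: (i) there is a (necessarily unique) conjugate-linear, antimultiplicative, unital involution θ of B with θ(x_i) = y_{σ(i)} and θ(y_i) = x_{σ(i)} for all i; (ii) every ℂ-algebra homomorphism Δ: V̌(R′,R) → B with Δ(x_i) = x_i + y_i for all i satisfies Δ(a*) = θ(Δ(a)) for all a ∈ V̌(R′,R). -/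
/-!
The map x_i ↦ y_{σ i}, y_i ↦ x_{σ i} extends to a conjugate-linear antimultiplicative map θ on
the free algebra (a ring hom into the opposite algebra). It descends to B because it sends each
defining relation to a relation of B: after reindexing by σ, the type II reality condition turns
the conjugate of the cross relation (and of the x- and y-relations in the real case) back into a
relation of the same kind; in the antireal case the relation is instead solved for
y_{σ j} y_{σ i} using R′⁻¹. Uniqueness of θ, θ² = id and Δ(a*) = θ(Δ a) hold because both sides
are determined by their values on generators.
-/

open scoped ComplexConjugate

noncomputable section

open MulOpposite

section ConjLinearAntiHom

variable {A B C : Type*} [Semiring A] [Algebra ℂ A] [Semiring B] [Algebra ℂ B]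
  [Semiring C] [Algebra ℂ C]

theorem IsStarStructure.isConjLinearAntiHom {f : A → A} (hf : IsStarStructure f) :
    IsConjLinearAntiHom f :=
  ⟨hf.1, hf.2.1, hf.2.2.1, hf.2.2.2.1⟩

namespace IsConjLinearAntiHom

variable {f : A → B}

theorem map_algebraMap (hf : IsConjLinearAntiHom f) (c : ℂ) :
    f (algebraMap ℂ A c) = algebraMap ℂ B (conj c) := by
  rw [Algebra.algebraMap_eq_smul_one, hf.2.1, hf.2.2.2, Algebra.algebraMap_eq_smul_one]

theorem comp_algHom (hf : IsConjLinearAntiHom f) (g : C →ₐ[ℂ] A) :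
    IsConjLinearAntiHom (f ∘ g) :=
  ⟨fun a b => by simp [hf.1], fun c a => by simp [hf.2.1],
    fun a b => by simp [hf.2.2.1], by simp [hf.2.2.2]⟩

theorem algHom_comp (hf : IsConjLinearAntiHom f) (g : B →ₐ[ℂ] C) :
    IsConjLinearAntiHom (g ∘ f) :=
  ⟨fun a b => by simp [hf.1], fun c a => by simp [hf.2.1],
    fun a b => by simp [hf.2.2.1], by simp [hf.2.2.2]⟩

end IsConjLinearAntiHom

end ConjLinearAntiHom

section FreeQuotient

variable {X B : Type*} [Semiring B] [Algebra ℂ B] {r : FreeAlgebra ℂ X → FreeAlgebra ℂ X → Prop}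

theorem RingQuot.induction_freeAlgebra {S : Type*} [CommSemiring S]
    {s : FreeAlgebra S X → FreeAlgebra S X → Prop} {P : RingQuot s → Prop}
    (algebraMap : ∀ c, P (algebraMap S _ c))
    (ι : ∀ x, P (mkAlgHom S s (FreeAlgebra.ι S x)))
    (add : ∀ a b, P a → P b → P (a + b)) (mul : ∀ a b, P a → P b → P (a * b))
    (z : RingQuot s) : P z := by
  obtain ⟨u, rfl⟩ := mkAlgHom_surjective S s z
  induction u using FreeAlgebra.induction with
  | grade0 c => simpa using algebraMap c
  | grade1 x => exact ι x
  | add u v hu hv => simpa using add _ _ hu hv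
  | mul u v hu hv => simpa using mul _ _ hu hv

theorem IsConjLinearAntiHom.ringQuot_ext {f g : RingQuot r → B}
    (hf : IsConjLinearAntiHom f) (hg : IsConjLinearAntiHom g)
    (h : ∀ x, f (RingQuot.mkAlgHom ℂ r (FreeAlgebra.ι ℂ x)) =
      g (RingQuot.mkAlgHom ℂ r (FreeAlgebra.ι ℂ x))) : f = g := by
  funext z
  induction z using RingQuot.induction_freeAlgebra with
  | algebraMap c => rw [hf.map_algebraMap, hg.map_algebraMap]
  | ι x => exact h x
  | add a b ha hb => rw [hf.1, hg.1, ha, hb]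
  | mul a b ha hb => rw [hf.2.2.1, hg.2.2.1, ha, hb]

theorem IsConjLinearAntiHom.isStarStructure_ringQuot {f : RingQuot r → RingQuot r}
    (hf : IsConjLinearAntiHom f)
    (h : ∀ x, f (f (RingQuot.mkAlgHom ℂ r (FreeAlgebra.ι ℂ x))) =
      RingQuot.mkAlgHom ℂ r (FreeAlgebra.ι ℂ x)) : IsStarStructure f := by
  refine ⟨hf.1, hf.2.1, hf.2.2.1, hf.2.2.2, fun z => ?_⟩
  induction z using RingQuot.induction_freeAlgebra with
  | algebraMap c => rw [hf.map_algebraMap, hf.map_algebraMap, Complex.conj_conj]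
  | ι x => exact h x
  | add a b ha hb => rw [hf.1, hf.1, ha, hb]
  | mul a b ha hb => rw [hf.2.2.1, hf.2.2.1, ha, hb]

/-- The conjugate-linear antimultiplicative extension of `g`, encoded as a ring hom into `Bᵐᵒᵖ`:
it is the `ℂ`-algebra hom for the scalar action on `Bᵐᵒᵖ` twisted by `conj`. -/
def FreeAlgebra.conjAntiLift (g : X → B) : FreeAlgebra ℂ X →+* Bᵐᵒᵖ :=
  letI := Algebra.compHom Bᵐᵒᵖ (starRingEnd ℂ)
  (FreeAlgebra.lift ℂ (op ∘ g)).toRingHom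

namespace FreeAlgebra

variable (g : X → B)

@[simp]
theorem conjAntiLift_ι (x : X) : conjAntiLift g (ι ℂ x) = op (g x) := by
  simp [conjAntiLift]

theorem conjAntiLift_algebraMap (c : ℂ) :
    conjAntiLift g (algebraMap ℂ _ c) = op (algebraMap ℂ B (conj c)) :=
  letI := Algebra.compHom Bᵐᵒᵖ (starRingEnd ℂ)
  (FreeAlgebra.lift ℂ (op ∘ g)).commutes c

@[simp]
theorem conjAntiLift_smul (c : ℂ) (u : FreeAlgebra ℂ X) :
    conjAntiLift g (c • u) = op (conj c • unop (conjAntiLift g u)) := by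
  rw [Algebra.smul_def, map_mul, conjAntiLift_algebraMap, ← op_unop (conjAntiLift g u),
    ← op_mul, unop_op, ← Algebra.commutes, ← Algebra.smul_def]

end FreeAlgebra

def RingQuot.conjAntiLift (g : X → B)
    (hg : ∀ ⦃a b⦄, r a b → FreeAlgebra.conjAntiLift g a = FreeAlgebra.conjAntiLift g b) :
    RingQuot r → B :=
  fun z => unop (RingQuot.lift ⟨FreeAlgebra.conjAntiLift g, hg⟩ z)

namespace RingQuot

variable (g : X → B)
  (hg : ∀ ⦃a b⦄, r a b → FreeAlgebra.conjAntiLift g a = FreeAlgebra.conjAntiLift g b)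

theorem conjAntiLift_mkAlgHom (u : FreeAlgebra ℂ X) :
    conjAntiLift g hg (mkAlgHom ℂ r u) = unop (FreeAlgebra.conjAntiLift g u) := by
  rw [conjAntiLift, ← lift_mkRingHom_apply _ hg, ← mkAlgHom_coe ℂ]
  rfl

theorem conjAntiLift_mkAlgHom_ι (x : X) :
    conjAntiLift g hg (mkAlgHom ℂ r (FreeAlgebra.ι ℂ x)) = g x := by
  simp [conjAntiLift_mkAlgHom]

theorem isConjLinearAntiHom_conjAntiLift : IsConjLinearAntiHom (conjAntiLift g hg) := by
  refine ⟨fun a b => by simp [conjAntiLift], fun c z => ?_, fun a b => by simp [conjAntiLift],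
    by simp [conjAntiLift]⟩
  obtain ⟨u, rfl⟩ := mkAlgHom_surjective ℂ r z
  simp [← map_smul, conjAntiLift_mkAlgHom]

end RingQuot

end FreeQuotient

theorem Matrix.sum_inv_smul_eq_of_eq_sum_smul {ι K M : Type*} [Fintype ι] [DecidableEq ι]
    [CommRing K] [AddCommMonoid M] [Module K M] {A : Matrix ι ι K} (hA : IsUnit A)
    {p q : ι → M} (h : ∀ u, p u = ∑ v, A v u • q v) (w : ι) :
    ∑ u, A⁻¹ u w • p u = q w := by
  simp only [h, Finset.smul_sum, smul_smul]
  rw [Finset.sum_comm]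
  simp_rw [← Finset.sum_smul, mul_comm (A⁻¹ _ w), ← Matrix.mul_apply,
    Matrix.mul_nonsing_inv _ ((Matrix.isUnit_iff_isUnit_det A).mp hA)]
  simp [Matrix.one_apply]

section TypeII

variable {n : ℕ} {σ : Fin n → Fin n} {M : Fin n → Fin n → Fin n → Fin n → ℂ}
  {V : Type*} [AddCommMonoid V] [Module ℂ V]

theorem RealTypeII.conj_relation (hσ : Function.Involutive σ) (hM : RealTypeII n M σ)
    {F G : Fin n → Fin n → V} (hrel : ∀ p q, F p q = ∑ a, ∑ b, M a p b q • G b a) (i j : Fin n) :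
    F (σ j) (σ i) = ∑ a, ∑ b, conj (M a i b j) • G (σ a) (σ b) := by
  rw [hrel, Finset.sum_comm]
  exact Fintype.sum_equiv (hσ.toPerm σ) _ _ fun a =>
    Fintype.sum_equiv (hσ.toPerm σ) _ _ fun b => by
      rw [hM]; simp only [Function.Involutive.coe_toPerm, hσ _]

theorem AntirealTypeII.conj_relation (hσ : Function.Involutive σ) (hM : AntirealTypeII n M σ)
    {F : Fin n → Fin n → V} (hrel : ∀ p q, F p q = ∑ a, ∑ b, M a p b q • F b a) (i j : Fin n) :
    F (σ j) (σ i) = ∑ a, ∑ b, conj (M a i b j) • F (σ a) (σ b) := by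
  rw [← Matrix.sum_inv_smul_eq_of_eq_sum_smul hM.1 (p := fun u => F u.1 u.2)
    (q := fun v => F v.2 v.1) (fun u => by rw [hrel, ← Fintype.sum_prod_type']; rfl) (σ i, σ j),
    Fintype.sum_prod_type]
  exact Fintype.sum_equiv (hσ.toPerm σ) _ _ fun a =>
    Fintype.sum_equiv (hσ.toPerm σ) _ _ fun b => by
      rw [hM.2, invEntry]; simp only [Function.Involutive.coe_toPerm, hσ _]

theorem conj_relation_of_realTypeII_or_antirealTypeII (hσ : Function.Involutive σ)
    (hM : RealTypeII n M σ ∨ AntirealTypeII n M σ)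
    {F : Fin n → Fin n → V} (hrel : ∀ p q, F p q = ∑ a, ∑ b, M a p b q • F b a) (i j : Fin n) :
    F (σ j) (σ i) = ∑ a, ∑ b, conj (M a i b j) • F (σ a) (σ b) :=
  hM.elim (fun h => h.conj_relation hσ hrel i j) (fun h => h.conj_relation hσ hrel i j)

end TypeII

section BraidedSquare

variable {n : ℕ} {σ : Fin n → Fin n} {R' R : Fin n → Fin n → Fin n → Fin n → ℂ}

theorem Xg_mul_Xg (i j : Fin n) :
    Xg n R' R i * Xg n R' R j = ∑ a, ∑ b, R' a i b j • (Xg n R' R b * Xg n R' R a) := by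
  simpa [Xg] using RingQuot.mkAlgHom_rel ℂ (SqRel.xx (R := R) i j)

theorem Yg_mul_Yg (i j : Fin n) :
    Yg n R' R i * Yg n R' R j = ∑ a, ∑ b, R' a i b j • (Yg n R' R b * Yg n R' R a) := by
  simpa [Yg] using RingQuot.mkAlgHom_rel ℂ (SqRel.yy (R := R) i j)

theorem Yg_mul_Xg (i j : Fin n) :
    Yg n R' R i * Xg n R' R j = ∑ a, ∑ b, R a i b j • (Xg n R' R b * Yg n R' R a) := by
  simpa [Xg, Yg] using RingQuot.mkAlgHom_rel ℂ (SqRel.yx (R' := R') i j)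

variable (n σ R' R) in
def sqStarGen : Fin n ⊕ Fin n → SqAlg n R' R :=
  Sum.elim (fun i => Yg n R' R (σ i)) (fun i => Xg n R' R (σ i))

theorem conjAntiLift_sqStarGen_eq_of_sqRel (hσ : Function.Involutive σ)
    (hR : RealTypeII n R σ) (hR' : RealTypeII n R' σ ∨ AntirealTypeII n R' σ) ⦃a b⦄
    (h : SqRel n R' R a b) :
    FreeAlgebra.conjAntiLift (sqStarGen n σ R' R) a =
      FreeAlgebra.conjAntiLift (sqStarGen n σ R' R) b := by
  rcases h with ⟨i, j⟩ | ⟨i, j⟩ | ⟨i, j⟩ <;>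
    simp only [map_mul, map_sum, FreeAlgebra.conjAntiLift_ι, FreeAlgebra.conjAntiLift_smul,
      unop_op, ← op_mul, ← Finset.op_sum, op_inj, sqStarGen, Sum.elim_inl, Sum.elim_inr]
  · exact conj_relation_of_realTypeII_or_antirealTypeII hσ hR' Yg_mul_Yg i j
  · exact conj_relation_of_realTypeII_or_antirealTypeII hσ hR' Xg_mul_Xg i j
  · exact hR.conj_relation hσ Yg_mul_Xg i j

/-- The involution `θ` of the braided tensor square. -/
def sqStar (hσ : Function.Involutive σ) (hR : RealTypeII n R σ)
    (hR' : RealTypeII n R' σ ∨ AntirealTypeII n R' σ) : SqAlg n R' R → SqAlg n R' R :=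
  RingQuot.conjAntiLift (sqStarGen n σ R' R) (conjAntiLift_sqStarGen_eq_of_sqRel hσ hR hR')

variable (hσ : Function.Involutive σ) (hR : RealTypeII n R σ)
  (hR' : RealTypeII n R' σ ∨ AntirealTypeII n R' σ)

theorem sqStar_Xg (i : Fin n) : sqStar hσ hR hR' (Xg n R' R i) = Yg n R' R (σ i) :=
  RingQuot.conjAntiLift_mkAlgHom_ι _ _ (Sum.inl i)

theorem sqStar_Yg (i : Fin n) : sqStar hσ hR hR' (Yg n R' R i) = Xg n R' R (σ i) :=
  RingQuot.conjAntiLift_mkAlgHom_ι _ _ (Sum.inr i)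

theorem isStarStructure_sqStar : IsStarStructure (sqStar hσ hR hR') := by
  refine (RingQuot.isConjLinearAntiHom_conjAntiLift _ _).isStarStructure_ringQuot ?_
  rintro (i | i)
  · change sqStar hσ hR hR' (sqStar hσ hR hR' (Xg n R' R i)) = Xg n R' R i
    rw [sqStar_Xg, sqStar_Yg, hσ i]
  · change sqStar hσ hR hR' (sqStar hσ hR hR' (Yg n R' R i)) = Yg n R' R i
    rw [sqStar_Yg, sqStar_Xg, hσ i]

end BraidedSquare

theorem stmt6_general (n : ℕ)
    (σ : Fin n → Fin n) (hσ : Function.Involutive σ)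
    (R R' : Fin n → Fin n → Fin n → Fin n → ℂ)
    (hR : RealTypeII n R σ)
    (hR' : RealTypeII n R' σ ∨ AntirealTypeII n R' σ)
    (f : CovAlg n R' → CovAlg n R')
    (hf : IsStarStructure f)
    (hfgen : ∀ i : Fin n, f (xg n R' i) = xg n R' (σ i)) :
    ∃! θ : SqAlg n R' R → SqAlg n R' R,
      (IsStarStructure θ ∧
        (∀ i : Fin n, θ (Xg n R' R i) = Yg n R' R (σ i)) ∧
        (∀ i : Fin n, θ (Yg n R' R i) = Xg n R' R (σ i))) ∧
      ∀ Δ : CovAlg n R' →ₐ[ℂ] SqAlg n R' R,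
        (∀ i : Fin n, Δ (xg n R' i) = Xg n R' R i + Yg n R' R i) →
        ∀ a : CovAlg n R', Δ (f a) = θ (Δ a) := by
  have hθ := isStarStructure_sqStar hσ hR hR'
  refine ⟨sqStar hσ hR hR', ⟨⟨hθ, sqStar_Xg hσ hR hR', sqStar_Yg hσ hR hR'⟩, fun Δ hΔ => ?_⟩, ?_⟩
  · refine congrFun ((hf.isConjLinearAntiHom.algHom_comp Δ).ringQuot_ext
      (hθ.isConjLinearAntiHom.comp_algHom Δ) fun i => ?_)
    change Δ (f (xg n R' i)) = sqStar hσ hR hR' (Δ (xg n R' i))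
    rw [hfgen, hΔ, hΔ, hθ.1, sqStar_Xg, sqStar_Yg, add_comm]
  · rintro θ ⟨⟨hθ', hX, hY⟩, -⟩
    refine hθ'.isConjLinearAntiHom.ringQuot_ext hθ.isConjLinearAntiHom ?_
    rintro (i | i)
    · exact (hX i).trans (sqStar_Xg hσ hR hR' i).symm
    · exact (hY i).trans (sqStar_Yg hσ hR hR' i).symm

/-- for `σ` an involution, `R` real type II and `R'` real or antireal
type II (all w.r.t. `σ`), and `*` the star structure on `V̌(R',R)` with
`x_i* = x_{σ(i)}`: (i) the braided tensor square `B` admits a unique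
conjugate-linear antimultiplicative unital involution `θ` with `θ(x_i) = y_{σ(i)}`,
`θ(y_i) = x_{σ(i)}`; (ii) every ℂ-algebra map `Δ : V̌(R',R) → B` with
`Δ(x_i) = x_i + y_i` satisfies `Δ(a*) = θ(Δ(a))`. -/
theorem stmt6 (n : ℕ) (hn : 1 ≤ n)
    (σ : Fin n → Fin n) (hσ : Function.Involutive σ)
    (R R' : Fin n → Fin n → Fin n → Fin n → ℂ)
    (hR : RealTypeII n R σ)
    (hR' : RealTypeII n R' σ ∨ AntirealTypeII n R' σ)
    (f : CovAlg n R' → CovAlg n R')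
    (hf : IsStarStructure f)
    (hfgen : ∀ i : Fin n, f (xg n R' i) = xg n R' (σ i)) :
    ∃! θ : SqAlg n R' R → SqAlg n R' R,
      (IsStarStructure θ ∧
        (∀ i : Fin n, θ (Xg n R' R i) = Yg n R' R (σ i)) ∧
        (∀ i : Fin n, θ (Yg n R' R i) = Xg n R' R (σ i))) ∧
      ∀ Δ : CovAlg n R' →ₐ[ℂ] SqAlg n R' R,
        (∀ i : Fin n, Δ (xg n R' i) = Xg n R' R i + Yg n R' R i) →
        ∀ a : CovAlg n R', Δ (f a) = θ (Δ a) :=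
  stmt6_general n σ hσ R R' hR hR' f hf hfgen
end
end
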